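/- arXiv:1109.4015 — 3 statements merged into one kernel-verified Lean document; each statement's English description precedes it below -/
import Mathlib

section
/- Let J ⊆ E be a stable monomial ideal with J ≠ 0 and J containing no variable e_i, let p ≥ 2 be an integer with G(J)_p ≠ ∅, and set t_p = max{max(u) : u ∈ G(J)_p}. Then span_K{e_1, …, e_{t_p}} ⊆ R^{p−1}(E/J). -/
open scoped BigOperators

noncomputable section

/-- The exterior algebra `E = Λ(K^n)`. -/
abbrev ExtE (K : Type*) [Field K] (n : ℕ) := ExteriorAlgebra K (Fin n → K)

/-- The generator `e_i` of the exterior algebra. -/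
noncomputable def eVar (K : Type*) [Field K] (n : ℕ) (i : Fin n) : ExtE K n :=
  ExteriorAlgebra.ι K (Pi.single i 1)

/-- The monomial `e_F = e_{i_1} ∧ ⋯ ∧ e_{i_p}` for `F = {i_1 < ⋯ < i_p}`. -/
noncomputable def eMonF (K : Type*) [Field K] (n : ℕ) (F : Finset (Fin n)) : ExtE K n :=
  ((F.sort (· ≤ ·)).map (eVar K n)).prod

/-- The `p`-th graded component `E_p` of the exterior algebra. -/
noncomputable def eGrade (K : Type*) [Field K] (n : ℕ) (p : ℕ) : Submodule K (ExtE K n) :=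
  (LinearMap.range (ExteriorAlgebra.ι K : (Fin n → K) →ₗ[K] ExtE K n)) ^ p

/-- The two-sided ideal of `E` generated by a set `S`, as a `K`-submodule of `E`. -/
noncomputable def tsIdeal (K : Type*) [Field K] (n : ℕ) (S : Set (ExtE K n)) :
    Submodule K (ExtE K n) :=
  Submodule.span K {x : ExtE K n | ∃ a s b : ExtE K n, s ∈ S ∧ x = a * s * b}

/-- `∂e_F = ∑_{j=1}^t (−1)^{j−1} e_{F∖{i_j}}` for `F = {i_1 < ⋯ < i_t}`. -/
noncomputable def osDelta (K : Type*) [Field K] (n : ℕ) (F : Finset (Fin n)) : ExtE K n :=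
  ∑ k ∈ F, ((-1 : K) ^ (F.filter (fun j => j < k)).card) • eMonF K n (F.erase k)

/-- The first resonance variety `R^1(E/J)` of `E/J`, viewed inside `E_1`. -/
noncomputable def resonance1 (K : Type*) [Field K] (n : ℕ) (J : Submodule K (ExtE K n)) :
    Set (ExtE K n) :=
  {u | u ∈ eGrade K n 1 ∧ (u = 0 ∨ ∃ v ∈ eGrade K n 1, u * v ∈ J ∧ u * v ≠ 0)}

/-- The `q`-th resonance variety `R^q(E/J)` of `E/J` for `q ≥ 1`, viewed inside `E_1`. -/
noncomputable def resonanceQ (K : Type*) [Field K] (n : ℕ) (J : Submodule K (ExtE K n))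
    (q : ℕ) : Set (ExtE K n) :=
  {u | u ∈ eGrade K n 1 ∧ (u = 0 ∨ ∃ v ∈ eGrade K n q, v ∉ J ∧
    (¬ ∃ w ∈ eGrade K n (q - 1), v = u * w) ∧ u * v ∈ J ∧ u * v ≠ 0)}

/-- The rank variety `V_E(E/J)`, viewed inside `E_1`. -/
noncomputable def rankVar (K : Type*) [Field K] (n : ℕ) (J : Submodule K (ExtE K n)) :
    Set (ExtE K n) :=
  {u | u ∈ eGrade K n 1 ∧ ∃ w : ExtE K n, u * w ∈ J ∧
    ¬ ∃ j ∈ J, ∃ x : ExtE K n, w = j + u * x}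

namespace StableAux

open ExteriorAlgebra

variable {K : Type*} [Field K] {n : ℕ}

/-- Product of variables along a list. -/
noncomputable def eML (K : Type*) [Field K] (n : ℕ) (l : List (Fin n)) : ExtE K n :=
  (l.map (eVar K n)).prod

lemma eML_nil : eML K n [] = 1 := rfl

lemma eML_cons (i : Fin n) (l : List (Fin n)) :
    eML K n (i :: l) = eVar K n i * eML K n l := by
  simp [eML]

lemma eMonF_def (S : Finset (Fin n)) : eMonF K n S = eML K n (S.sort (· ≤ ·)) := rfl

lemma eVar_anticomm (i j : Fin n) :
    eVar K n j * eVar K n i = -(eVar K n i * eVar K n j) :=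
  eq_neg_of_add_eq_zero_right (ExteriorAlgebra.ι_add_mul_swap _ _)

lemma eVar_sq (i : Fin n) : eVar K n i * eVar K n i = 0 :=
  ExteriorAlgebra.ι_sq_zero _

lemma eML_perm {l l' : List (Fin n)} (h : l.Perm l') :
    ∃ ε : Kˣ, eML K n l = (ε : K) • eML K n l' := by
  induction h with
  | nil => exact ⟨1, by simp⟩
  | cons x h ih =>
    obtain ⟨ε, he⟩ := ih
    exact ⟨ε, by rw [eML_cons, eML_cons, he, mul_smul_comm]⟩
  | swap x y l =>
    refine ⟨-1, ?_⟩
    rw [eML_cons, eML_cons, eML_cons, eML_cons, ← mul_assoc, ← mul_assoc,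
      eVar_anticomm]
    simp
  | trans h1 h2 ih1 ih2 =>
    obtain ⟨ε1, he1⟩ := ih1
    obtain ⟨ε2, he2⟩ := ih2
    exact ⟨ε1 * ε2, by rw [he1, he2, smul_smul, Units.val_mul]⟩

lemma eML_eq_eMonF {S : Finset (Fin n)} {l : List (Fin n)} (h : l.Perm S.toList) :
    ∃ ε : Kˣ, eML K n l = (ε : K) • eMonF K n S :=
  eML_perm (h.trans (Finset.sort_perm_toList _ _).symm)

lemma eVar_mul_eMonF_not_mem {i : Fin n} {S : Finset (Fin n)} (h : i ∉ S) :
    ∃ ε : Kˣ, eVar K n i * eMonF K n S = (ε : K) • eMonF K n (insert i S) := by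
  have hp : (i :: S.sort (· ≤ ·)).Perm (insert i S).toList :=
    ((Finset.sort_perm_toList _ _).cons i).trans (Finset.toList_insert h).symm
  obtain ⟨ε, he⟩ := eML_eq_eMonF (K := K) hp
  exact ⟨ε, by rw [← he, eML_cons, eMonF_def]⟩

lemma eVar_mul_eMonF_mem {i : Fin n} {S : Finset (Fin n)} (h : i ∈ S) :
    eVar K n i * eMonF K n S = 0 := by
  obtain ⟨ε, he⟩ := eVar_mul_eMonF_not_mem (K := K) (Finset.notMem_erase i S)
  rw [Finset.insert_erase h] at he
  have : eMonF K n S = ((ε⁻¹ : Kˣ) : K) • (eVar K n i * eMonF K n (S.erase i)) := by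
    rw [he, smul_smul]; simp
  rw [this, mul_smul_comm, ← mul_assoc, eVar_sq, zero_mul, smul_zero]

lemma eML_append (l l' : List (Fin n)) :
    eML K n (l ++ l') = eML K n l * eML K n l' := by
  simp [eML]

lemma eML_not_nodup {l : List (Fin n)} (h : ¬ l.Nodup) : eML K n l = 0 := by
  induction l with
  | nil => exact absurd List.nodup_nil h
  | cons x xs ih =>
    rw [List.nodup_cons] at h
    push_neg at h
    by_cases hx : x ∈ xs
    · obtain ⟨ε, he⟩ := eML_perm (K := K) (List.perm_cons_erase hx)
      rw [eML_cons, he, eML_cons, mul_smul_comm, ← mul_assoc, eVar_sq, zero_mul,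
        smul_zero]
    · rw [eML_cons, ih (h hx), mul_zero]

end StableAux
namespace StableAux

variable {K : Type*} [Field K] {n : ℕ}

lemma eMonF_mul_eMonF (S T : Finset (Fin n)) :
    (∃ ε : Kˣ, eMonF K n S * eMonF K n T = (ε : K) • eMonF K n (S ∪ T)) ∨
      eMonF K n S * eMonF K n T = 0 := by
  have hprod : eMonF K n S * eMonF K n T
      = eML K n (S.sort (· ≤ ·) ++ T.sort (· ≤ ·)) := by
    rw [eML_append, eMonF_def, eMonF_def]
  by_cases hd : Disjoint S T
  · left
    have hval : ((S.sort (· ≤ ·) ++ T.sort (· ≤ ·) : List (Fin n)) : Multiset (Fin n))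
        = ((S ∪ T).toList : Multiset (Fin n)) := by
      rw [← Multiset.coe_add, Finset.sort_eq, Finset.sort_eq, Finset.coe_toList,
        ← Finset.disjUnion_eq_union S T hd]
      rfl
    obtain ⟨ε, he⟩ := eML_eq_eMonF (K := K) (Multiset.coe_eq_coe.mp hval)
    exact ⟨ε, by rw [hprod, he]⟩
  · right
    rw [Finset.not_disjoint_iff] at hd
    obtain ⟨a, haS, haT⟩ := hd
    refine hprod.trans (eML_not_nodup ?_)
    rw [List.nodup_append]
    push_neg
    intro _ _
    exact ⟨a, (Finset.mem_sort _).2 haS, a, (Finset.mem_sort _).2 haT, rfl⟩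

end StableAux
namespace StableAux

variable {K : Type*} [Field K] {n : ℕ}

lemma one_eq_eMonF_empty : (1 : ExtE K n) = eMonF K n ∅ := by
  rw [eMonF_def, Finset.sort_empty, eML_nil]

lemma eVar_eq_eMonF_single (i : Fin n) : eVar K n i = eMonF K n {i} := by
  rw [eMonF_def, Finset.sort_singleton]
  simp [eML]

lemma iota_eq_sum (x : Fin n → K) :
    ExteriorAlgebra.ι K x = ∑ i : Fin n, x i • eVar K n i := by
  conv_lhs => rw [← Finset.univ_sum_single x]
  rw [map_sum]
  refine Finset.sum_congr rfl fun i _ => ?_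
  rw [eVar, ← map_smul]
  congr 1
  ext j
  by_cases h : i = j <;> simp [Pi.single_apply, h]

/-- The span of all monomials. -/
noncomputable def monSpan (K : Type*) [Field K] (n : ℕ) : Submodule K (ExtE K n) :=
  Submodule.span K (Set.range (eMonF K n))

lemma monSpan_mul {x y : ExtE K n} (hx : x ∈ monSpan K n) (hy : y ∈ monSpan K n) :
    x * y ∈ monSpan K n := by
  induction hx using Submodule.span_induction with
  | mem a ha =>
    obtain ⟨S, rfl⟩ := ha
    induction hy using Submodule.span_induction with
    | mem b hb =>
      obtain ⟨T, rfl⟩ := hb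
      rcases eMonF_mul_eMonF (K := K) S T with ⟨ε, he⟩ | he
      · rw [he]
        exact Submodule.smul_mem _ _ (Submodule.subset_span ⟨S ∪ T, rfl⟩)
      · rw [he]; exact Submodule.zero_mem _
    | zero => rw [mul_zero]; exact Submodule.zero_mem _
    | add b c _ _ hb hc => rw [mul_add]; exact Submodule.add_mem _ hb hc
    | smul a b _ hb => rw [mul_smul_comm]; exact Submodule.smul_mem _ _ hb
  | zero => rw [zero_mul]; exact Submodule.zero_mem _
  | add a b _ _ ha hb => rw [add_mul]; exact Submodule.add_mem _ ha hb
  | smul a b _ hb => rw [smul_mul_assoc]; exact Submodule.smul_mem _ _ hb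

lemma mem_monSpan (x : ExtE K n) : x ∈ monSpan K n := by
  induction x using ExteriorAlgebra.induction with
  | algebraMap r =>
    rw [Algebra.algebraMap_eq_smul_one, one_eq_eMonF_empty]
    exact Submodule.smul_mem _ _ (Submodule.subset_span ⟨∅, rfl⟩)
  | ι m =>
    rw [iota_eq_sum]
    exact Submodule.sum_mem _ fun i _ => Submodule.smul_mem _ _
      (Submodule.subset_span ⟨{i}, (eVar_eq_eMonF_single i).symm⟩)
  | mul a b ha hb => exact monSpan_mul ha hb
  | add a b ha hb => exact Submodule.add_mem _ ha hb

lemma eML_mem_pow (l : List (Fin n)) :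
    eML K n l ∈ (LinearMap.range (ExteriorAlgebra.ι K : (Fin n → K) →ₗ[K] ExtE K n)) ^ l.length := by
  induction l with
  | nil =>
    rw [List.length_nil, pow_zero, eML_nil]
    exact Submodule.mem_one.mpr ⟨1, map_one _⟩
  | cons x xs ih =>
    rw [eML_cons, List.length_cons, pow_succ']
    exact Submodule.mul_mem_mul ⟨Pi.single x 1, rfl⟩ ih

lemma eMonF_mem_eGrade (S : Finset (Fin n)) : eMonF K n S ∈ eGrade K n S.card := by
  rw [eGrade, eMonF_def, ← Finset.length_sort (α := Fin n) (· ≤ ·) (s := S)]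
  exact eML_mem_pow _

end StableAux
namespace StableAux

variable {K : Type*} [Field K] {n : ℕ}

/-- The determinant-of-coordinates alternating map used to define `coordFn`. -/
noncomputable def coordAlt (K : Type*) [Field K] (n : ℕ) (F : Finset (Fin n)) (k : ℕ)
    (h : F.card = k) : (Fin n → K) [⋀^Fin k]→ₗ[K] K :=
  (Matrix.detRowAlternating : (Fin k → K) [⋀^Fin k]→ₗ[K] K).compLinearMap
    (LinearMap.funLeft K K (fun j => F.orderEmbOfFin h j))

/-- The coordinate functional extracting the coefficient of `e_F`. -/
noncomputable def coordFn (K : Type*) [Field K] (n : ℕ) (F : Finset (Fin n)) :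
    ExtE K n →ₗ[K] K :=
  ExteriorAlgebra.liftAlternating
    (fun k => if h : F.card = k then coordAlt K n F k h else 0)

lemma eMonF_eq_iMulti (S : Finset (Fin n)) :
    eMonF K n S = ExteriorAlgebra.ιMulti K S.card
      (fun i => Pi.single (S.orderEmbOfFin rfl i) (1 : K)) := by
  rw [ExteriorAlgebra.ιMulti_apply, eMonF_def]
  unfold eML
  congr 1
  refine List.ext_getElem (by simp) fun i h1 h2 => ?_
  rw [List.getElem_map, List.getElem_ofFn]
  rfl

lemma coordFn_eMonF (F S : Finset (Fin n)) :
    coordFn K n F (eMonF K n S) = if S = F then 1 else 0 := by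
  rw [eMonF_eq_iMulti, coordFn, ExteriorAlgebra.liftAlternating_apply_ιMulti]
  by_cases hc : F.card = S.card
  · rw [dif_pos hc]
    rw [coordAlt, AlternatingMap.compLinearMap_apply]
    by_cases hSF : S = F
    · subst hSF
      rw [if_pos rfl]
      have : (fun i => LinearMap.funLeft K K (fun j => S.orderEmbOfFin hc j)
          (Pi.single (S.orderEmbOfFin rfl i) (1 : K))) = fun i j =>
            (1 : Matrix (Fin S.card) (Fin S.card) K) i j := by
        funext i j
        rw [LinearMap.funLeft_apply, Matrix.one_apply, Pi.single_apply]
        by_cases hij : (i : Fin S.card) = j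
        · subst hij
          simp
        · rw [if_neg hij, if_neg]
          intro hee
          exact hij ((S.orderEmbOfFin rfl).injective (by
            simpa using hee)).symm
      rw [this]
      exact Matrix.det_one
    · rw [if_neg hSF]
      have hss : ∃ s ∈ S, s ∉ F := by
        by_contra hcon
        push_neg at hcon
        exact hSF (Finset.eq_of_subset_of_card_le hcon (le_of_eq hc))
      obtain ⟨s, hsS, hsF⟩ := hss
      have : s ∈ Set.range (S.orderEmbOfFin (rfl : S.card = S.card)) := by
        rw [Finset.range_orderEmbOfFin]
        exact hsS
      obtain ⟨i0, hi0⟩ := this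
      exact Matrix.det_eq_zero_of_row_eq_zero i0 (fun j => by
        rw [LinearMap.funLeft_apply, hi0, Pi.single_apply, if_neg]
        intro hcontra
        exact hsF (hcontra ▸ Finset.orderEmbOfFin_mem F hc j))
  · rw [dif_neg hc, if_neg (fun h => hc (by rw [h])), AlternatingMap.zero_apply]

end StableAux
namespace StableAux

variable {K : Type*} [Field K] {n : ℕ}

/-- Span of all monomials containing some generator. -/
noncomputable def bigSpan (K : Type*) [Field K] (n : ℕ) (G : Finset (Finset (Fin n))) :
    Submodule K (ExtE K n) :=
  Submodule.span K {x | ∃ H : Finset (Fin n), (∃ F ∈ G, F ⊆ H) ∧ x = eMonF K n H}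

lemma eMonF_mem_bigSpan {G : Finset (Finset (Fin n))} {H : Finset (Fin n)}
    (h : ∃ F ∈ G, F ⊆ H) : eMonF K n H ∈ bigSpan K n G :=
  Submodule.subset_span ⟨H, h, rfl⟩

lemma mul_eMonF_mem_bigSpan {G : Finset (Finset (Fin n))} {F0 : Finset (Fin n)}
    (hF0 : F0 ∈ G) (a b : ExtE K n) :
    a * eMonF K n F0 * b ∈ bigSpan K n G := by
  have key : ∀ S T : Finset (Fin n),
      eMonF K n S * eMonF K n F0 * eMonF K n T ∈ bigSpan K n G := by
    intro S T
    rcases eMonF_mul_eMonF (K := K) S F0 with ⟨ε, he⟩ | he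
    · rw [he, smul_mul_assoc]
      rcases eMonF_mul_eMonF (K := K) (S ∪ F0) T with ⟨ε', he'⟩ | he'
      · rw [he']
        exact Submodule.smul_mem _ _ (Submodule.smul_mem _ _ (eMonF_mem_bigSpan
          ⟨F0, hF0, (Finset.subset_union_right).trans Finset.subset_union_left⟩))
      · rw [he', smul_zero]; exact Submodule.zero_mem _
    · rw [he, zero_mul]; exact Submodule.zero_mem _
  have hb := mem_monSpan (K := K) (n := n) b
  induction hb using Submodule.span_induction with
  | mem y hy =>
    obtain ⟨T, rfl⟩ := hy
    have ha := mem_monSpan (K := K) (n := n) a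
    induction ha using Submodule.span_induction with
    | mem z hz =>
      obtain ⟨S, rfl⟩ := hz
      exact key S T
    | zero => rw [zero_mul, zero_mul]; exact Submodule.zero_mem _
    | add z w _ _ hz hw =>
      rw [add_mul, add_mul]; exact Submodule.add_mem _ hz hw
    | smul c z _ hz =>
      rw [smul_mul_assoc, smul_mul_assoc]; exact Submodule.smul_mem _ _ hz
  | zero => rw [mul_zero]; exact Submodule.zero_mem _
  | add y z _ _ hy hz => rw [mul_add]; exact Submodule.add_mem _ hy hz
  | smul c y _ hy => rw [mul_smul_comm]; exact Submodule.smul_mem _ _ hy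

lemma tsIdeal_le_bigSpan (G : Finset (Finset (Fin n))) :
    tsIdeal K n (eMonF K n '' (G : Set (Finset (Fin n)))) ≤ bigSpan K n G := by
  rw [tsIdeal, Submodule.span_le]
  rintro x ⟨a, s, b, ⟨F0, hF0, rfl⟩, rfl⟩
  exact mul_eMonF_mem_bigSpan hF0 a b

lemma coordFn_vanish_bigSpan {G : Finset (Finset (Fin n))} {S : Finset (Fin n)}
    (hS : ∀ F ∈ G, ¬ F ⊆ S) {x : ExtE K n} (hx : x ∈ bigSpan K n G) :
    coordFn K n S x = 0 := by
  induction hx using Submodule.span_induction with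
  | mem y hy =>
    obtain ⟨H, ⟨F, hF, hFH⟩, rfl⟩ := hy
    rw [coordFn_eMonF, if_neg]
    rintro rfl
    exact hS F hF hFH
  | zero => exact map_zero _
  | add y z _ _ hy hz => rw [map_add, hy, hz, add_zero]
  | smul c y _ hy => rw [map_smul, hy, smul_zero]

lemma eMonF_not_mem_tsIdeal {G : Finset (Finset (Fin n))} {S : Finset (Fin n)}
    (hS : ∀ F ∈ G, ¬ F ⊆ S) :
    eMonF K n S ∉ tsIdeal K n (eMonF K n '' (G : Set (Finset (Fin n)))) := by
  intro hmem
  have h0 : coordFn K n S (eMonF K n S) = 0 :=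
    coordFn_vanish_bigSpan hS (tsIdeal_le_bigSpan G hmem)
  rw [coordFn_eMonF, if_pos rfl] at h0
  exact one_ne_zero h0

end StableAux
open StableAux
set_option maxHeartbeats 1000000
/-- For a stable monomial ideal `J ⊆ E` (nonzero, containing no variable),
`p ≥ 2` with `G(J)_p ≠ ∅` and `t_p = max{max(u) : u ∈ G(J)_p}`, one has
`span_K{e_1, …, e_{t_p}} ⊆ R^{p−1}(E/J)`. -/
theorem stmt1 {K : Type*} [Field K] [CharZero K] {n : ℕ}
    (G : Finset (Finset (Fin n))) (J : Submodule K (ExtE K n))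
    (hJ : J = tsIdeal K n (eMonF K n '' (G : Set (Finset (Fin n)))))
    (hmin : ∀ F ∈ G, ∀ F' ∈ G, F ⊆ F' → F = F')
    (hJne : J ≠ ⊥)
    (hvar : ∀ i : Fin n, eVar K n i ∉ J)
    (hstab : ∀ (F : Finset (Fin n)) (hF : F.Nonempty), eMonF K n F ∈ J →
      ∀ j : Fin n, j < F.max' hF → j ∉ F →
        eMonF K n (insert j (F.erase (F.max' hF))) ∈ J)
    (p : ℕ) (hp : 2 ≤ p)
    (tp : Fin n)
    (htp : IsGreatest {i : Fin n | ∃ F ∈ G, F.card = p ∧ i ∈ F} tp) :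
    (Submodule.span K (eVar K n '' {i : Fin n | i ≤ tp}) : Set (ExtE K n)) ⊆
      resonanceQ K n J (p - 1) := by
  intro u hu
  have hgen : Submodule.span K (eVar K n '' {i : Fin n | i ≤ tp}) ≤
      LinearMap.range (ExteriorAlgebra.ι K : (Fin n → K) →ₗ[K] ExtE K n) := by
    rw [Submodule.span_le]
    rintro _ ⟨i, -, rfl⟩
    exact ⟨Pi.single i 1, rfl⟩
  have hu1 : u ∈ eGrade K n 1 := by
    rw [eGrade, pow_one]; exact hgen hu
  refine ⟨hu1, ?_⟩
  by_cases hu0 : u = 0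
  · exact Or.inl hu0
  right
  -- express u = ι x with support in {i ≤ tp}
  have himg : eVar K n '' {i : Fin n | i ≤ tp} =
      ⇑(ExteriorAlgebra.ι K (M := Fin n → K)) ''
        ((fun i => Pi.single i (1 : K)) '' {i : Fin n | i ≤ tp}) := by
    rw [Set.image_image]; rfl
  rw [himg, Submodule.span_image] at hu
  obtain ⟨x, hxmem, rfl⟩ := hu
  have hsupp : ∀ j, tp < j → x j = 0 := by
    intro j hj
    have hle : Submodule.span K ((fun i => Pi.single i (1 : K)) '' {i : Fin n | i ≤ tp}) ≤
        LinearMap.ker (LinearMap.proj j : (Fin n → K) →ₗ[K] K) := by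
      rw [Submodule.span_le]
      rintro _ ⟨i, hi, rfl⟩
      have hij : j ≠ i := fun h => absurd (h ▸ hj) (not_lt.mpr hi)
      simp [LinearMap.mem_ker, Pi.single_apply, hij]
    simpa [LinearMap.mem_ker] using hle hxmem
  have hxne : ∃ m, x m ≠ 0 := by
    by_contra hcon
    push_neg at hcon
    exact hu0 (by rw [show x = 0 from funext hcon, map_zero])
  -- the generator F of degree p with max F = tp
  obtain ⟨F, hFG, hFcard, htpF⟩ := htp.1
  have hFne : F.Nonempty := Finset.card_pos.mp (by rw [hFcard]; omega)
  have hmax' : F.max' hFne = tp :=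
    le_antisymm (htp.2 ⟨F, hFG, hFcard, F.max'_mem hFne⟩) (F.le_max' tp htpF)
  have heF : eMonF K n F ∈ J := by
    rw [hJ]
    exact Submodule.subset_span ⟨1, eMonF K n F, 1, ⟨F, hFG, rfl⟩, by rw [one_mul, mul_one]⟩
  -- choose s0 and m
  obtain ⟨s0, hs0F, m, hxm, hmS, hins⟩ :
      ∃ s0, s0 ∈ F ∧ ∃ m, x m ≠ 0 ∧ m ∉ F.erase s0 ∧
        (∀ i, x i ≠ 0 → i ∉ F.erase s0 → eMonF K n (insert i (F.erase s0)) ∈ J) := by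
    by_cases hca : ∀ i, x i ≠ 0 → i ∈ F.erase tp
    · obtain ⟨m, hm⟩ := hxne
      have hmF : m ∈ F := Finset.mem_of_mem_erase (hca m hm)
      refine ⟨m, hmF, m, hm, Finset.notMem_erase m F, fun i hxi hiS => ?_⟩
      have hiFe : i ∈ F.erase tp := hca i hxi
      have : i = m := by
        by_contra hne
        exact hiS (Finset.mem_erase.mpr ⟨hne, Finset.mem_of_mem_erase hiFe⟩)
      rw [this, Finset.insert_erase hmF]
      exact heF
    · push_neg at hca
      obtain ⟨m, hxm, hmnot⟩ := hca
      refine ⟨tp, htpF, m, hxm, hmnot, fun i hxi hiS => ?_⟩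
      have hitp : i ≤ tp := by
        by_contra hgt
        exact hxi (hsupp i (not_le.mp hgt))
      rcases eq_or_lt_of_le hitp with heq | hlt
      · rw [heq, Finset.insert_erase htpF]
        exact heF
      · have hiF : i ∉ F := fun hiF =>
          hiS (Finset.mem_erase.mpr ⟨ne_of_lt hlt, hiF⟩)
        have := hstab F hFne heF i (by rw [hmax']; exact hlt) hiF
        rwa [hmax'] at this
  set S := F.erase s0 with hSdef
  have hcardS : S.card = p - 1 := by
    rw [hSdef, Finset.card_erase_of_mem hs0F, hFcard]
  -- the expansion of ι x * e_S
  have hexp : ExteriorAlgebra.ι K x * eMonF K n S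
      = ∑ i : Fin n, x i • (eVar K n i * eMonF K n S) := by
    rw [iota_eq_sum, Finset.sum_mul]
    exact Finset.sum_congr rfl fun i _ => smul_mul_assoc _ _ _
  -- nonvanishing via the coordinate functional at insert m S
  obtain ⟨εm, hεm⟩ := eVar_mul_eMonF_not_mem (K := K) hmS
  have hcoord : coordFn K n (insert m S) (ExteriorAlgebra.ι K x * eMonF K n S)
      = x m * εm := by
    rw [hexp, map_sum, Finset.sum_eq_single m]
    · rw [hεm, map_smul, map_smul, coordFn_eMonF, if_pos rfl, smul_eq_mul, smul_eq_mul,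
        mul_one]
    · intro i _ hne
      by_cases hiS : i ∈ S
      · rw [eVar_mul_eMonF_mem hiS, smul_zero, map_zero]
      · obtain ⟨ε, he⟩ := eVar_mul_eMonF_not_mem (K := K) hiS
        rw [he, map_smul, map_smul, coordFn_eMonF, if_neg, smul_zero, smul_zero]
        intro heq
        rcases Finset.mem_insert.mp (heq ▸ Finset.mem_insert_self i S) with h | h
        · exact hne h
        · exact hiS h
    · exact fun h => absurd (Finset.mem_univ m) h
  have hne0 : ExteriorAlgebra.ι K x * eMonF K n S ≠ 0 := by
    intro h0
    have := hcoord
    rw [h0, map_zero] at this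
    exact mul_ne_zero hxm (Units.ne_zero εm) this.symm
  refine ⟨eMonF K n S, ?_, ?_, ?_, ?_, hne0⟩
  · rw [← hcardS]; exact eMonF_mem_eGrade S
  · rw [hJ]
    apply eMonF_not_mem_tsIdeal
    intro F' hF' hsub
    have hFF : F' = F := hmin F' hF' F hFG (hsub.trans (Finset.erase_subset _ _))
    exact Finset.notMem_erase s0 F (hsub (hFF ▸ hs0F))
  · rintro ⟨w, -, hw⟩
    apply hne0
    rw [hw, ← mul_assoc, ExteriorAlgebra.ι_sq_zero, zero_mul]
  · rw [hexp]
    refine Submodule.sum_mem _ fun i _ => ?_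
    by_cases hiS : i ∈ S
    · rw [eVar_mul_eMonF_mem hiS, smul_zero]
      exact Submodule.zero_mem _
    · by_cases hxi : x i = 0
      · rw [hxi, zero_smul]
        exact Submodule.zero_mem _
      · obtain ⟨ε, he⟩ := eVar_mul_eMonF_not_mem (K := K) hiS
        rw [he]
        exact Submodule.smul_mem _ _ (Submodule.smul_mem _ _ (hins i hxi hiS))
end
end

section
/- Let M be a set of 2-element subsets of [n] and let W = span_K{e_j ∧ e_k : {j,k} ∈ M} ⊆ E_2. If u, v ∈ E_1 satisfy u ∧ v ∈ W and u ∧ v ≠ 0, then every index s ∈ supp(u) is contained in some member of M, i.e. for every s with nonzero coefficient in u there exists j ≠ s with {s,j} ∈ M. -/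
open scoped BigOperators

noncomputable section

/-- Coefficient-extraction functional for degree-2 monomials. -/
noncomputable def coeff2 (K : Type*) [Field K] (n : ℕ) (s t : Fin n) :
    ExtE K n →ₗ[K] K :=
  (ExteriorAlgebra.algebraMapInv.toLinearMap).comp
    ((CliffordAlgebra.contractLeft (LinearMap.proj t : (Fin n → K) →ₗ[K] K)).comp
      (CliffordAlgebra.contractLeft (LinearMap.proj s : (Fin n → K) →ₗ[K] K)))

theorem coeff2_ii (K : Type*) [Field K] (n : ℕ) (s t : Fin n) (x y : Fin n → K) :
    coeff2 K n s t (ExteriorAlgebra.ι K x * ExteriorAlgebra.ι K y)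
      = x s * y t - x t * y s := by
  simp only [coeff2, LinearMap.comp_apply]
  rw [CliffordAlgebra.contractLeft_ι_mul, CliffordAlgebra.contractLeft_ι,
    map_sub, map_smul, CliffordAlgebra.contractLeft_ι,
    CliffordAlgebra.contractLeft_mul_algebraMap, CliffordAlgebra.contractLeft_ι]
  simp [Algebra.smul_def, mul_comm]

theorem sum_eVar_eq (K : Type*) [Field K] (n : ℕ) (a : Fin n → K) :
    (∑ k : Fin n, a k • eVar K n k) = ExteriorAlgebra.ι K a := by
  have hsum : (∑ k : Fin n, a k • (Pi.single k 1 : Fin n → K)) = a := by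
    have h : ∀ k : Fin n, a k • (Pi.single k 1 : Fin n → K) = Pi.single k (a k) := by
      intro k
      ext i
      by_cases hik : i = k <;> simp [hik, Pi.single_apply]
    simp_rw [h]
    exact Finset.univ_sum_single a
  conv_rhs => rw [← hsum]
  rw [map_sum]
  simp only [map_smul, eVar]

/-- Let `M` be a set of 2-element subsets of `[n]` and
`W = span_K{e_j ∧ e_k : {j,k} ∈ M} ⊆ E_2`. If `u, v ∈ E_1` satisfy `u ∧ v ∈ W` and
`u ∧ v ≠ 0`, then every `s ∈ supp(u)` lies in some member of `M`. -/
theorem stmt7 {K : Type*} [Field K] [CharZero K] {n : ℕ}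
    (M : Set (Finset (Fin n))) (hM : ∀ p ∈ M, p.card = 2)
    (W : Submodule K (ExtE K n))
    (hW : W = Submodule.span K {x : ExtE K n | ∃ p ∈ M, ∃ j ∈ p, ∃ k ∈ p,
      j < k ∧ x = eVar K n j * eVar K n k})
    (a b : Fin n → K)
    (hmem : (∑ k : Fin n, a k • eVar K n k) * (∑ k : Fin n, b k • eVar K n k) ∈ W)
    (hne : (∑ k : Fin n, a k • eVar K n k) * (∑ k : Fin n, b k • eVar K n k) ≠ 0) :
    ∀ s : Fin n, a s ≠ 0 → ∃ j : Fin n, j ≠ s ∧ ({s, j} : Finset (Fin n)) ∈ M  := by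
  intro s hs
  by_contra hcon
  push_neg at hcon
  rw [sum_eVar_eq, sum_eVar_eq] at hmem hne
  have key : ∀ t : Fin n, a s * b t - a t * b s = 0 := by
    intro t
    rcases eq_or_ne t s with rfl | hts
    · ring
    rw [← coeff2_ii K n s t a b]
    subst hW
    have hker : Submodule.span K {x : ExtE K n | ∃ p ∈ M, ∃ j ∈ p, ∃ k ∈ p,
        j < k ∧ x = eVar K n j * eVar K n k} ≤ LinearMap.ker (coeff2 K n s t) := by
      rw [Submodule.span_le]
      rintro x ⟨p, hp, j, hj, k, hk, hjk, rfl⟩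
      have hjk' : j ≠ k := ne_of_lt hjk
      have hpeq : ({j, k} : Finset (Fin n)) = p := by
        apply Finset.eq_of_subset_of_card_le
        · intro i hi
          simp only [Finset.mem_insert, Finset.mem_singleton] at hi
          rcases hi with rfl | rfl
          · exact hj
          · exact hk
        · rw [hM p hp, Finset.card_insert_of_notMem (by simpa using hjk'),
            Finset.card_singleton]
      have hcoeff : coeff2 K n s t (eVar K n j * eVar K n k)
          = (Pi.single j 1 : Fin n → K) s * (Pi.single k 1 : Fin n → K) t
            - (Pi.single j 1 : Fin n → K) t * (Pi.single k 1 : Fin n → K) s := by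
        simpa [eVar] using coeff2_ii K n s t (Pi.single j 1) (Pi.single k 1)
      simp only [SetLike.mem_coe, LinearMap.mem_ker]
      rw [hcoeff]
      have hjs : j ≠ s := by
        intro hjs
        apply hcon k (fun h => hjk' (hjs.trans h.symm))
        rw [← hpeq, hjs] at hp
        exact hp
      have hks : k ≠ s := by
        intro hks
        apply hcon j (fun h => hjk' (h.trans hks.symm))
        rw [← hpeq, hks, Finset.pair_comm] at hp
        exact hp
      simp [Pi.single_apply, hjs, hks]
    exact hker hmem
  have hb : b = (b s / a s) • a := by
    funext t
    have h := key t
    have hbt : b t = (b s / a s) * a t := by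
      field_simp
      linear_combination h
    simpa [Pi.smul_apply, smul_eq_mul] using hbt
  apply hne
  rw [hb, map_smul, mul_smul_comm, ExteriorAlgebra.ι_sq_zero, smul_zero]
end
end

section
/- For all integers i ≥ 0 and r ≥ 0, ∑_{j=0}^{i} (j+1) · C(i+1, j+1) · C(r, j+2) = (i+1) · C(r+i, i+2), where C(a,b) denotes the binomial coefficient a choose b. -/
open scoped BigOperators

noncomputable section

/-- `∑_{j=0}^{i} (j+1) · C(i+1, j+1) · C(r, j+2) = (i+1) · C(r+i, i+2)`. -/
theorem stmt9 (i r : ℕ) :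
    ∑ j ∈ Finset.range (i + 1), (j + 1) * Nat.choose (i + 1) (j + 1) * Nat.choose r (j + 2)
      = (i + 1) * Nat.choose (r + i) (i + 2) := by
  have key : Nat.choose (r + i) (i + 2)
      = ∑ j ∈ Finset.range (i + 1), Nat.choose i j * Nat.choose r (j + 2) := by
    rw [Nat.add_choose_eq, Finset.Nat.sum_antidiagonal_eq_sum_range_succ_mk,
      Finset.sum_range_succ', Finset.sum_range_succ']
    have h3 : Nat.choose i (i + 2 - (0 + 1)) = 0 :=
      Nat.choose_eq_zero_of_lt (by omega)
    have h4 : Nat.choose i (i + 2 - 0) = 0 :=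
      Nat.choose_eq_zero_of_lt (by omega)
    simp only [h3, h4, mul_zero, add_zero]
    apply Finset.sum_congr rfl
    intro j hj
    simp only [Finset.mem_range] at hj
    have h5 : i + 2 - (j + 1 + 1) = i - j := by omega
    simp only [h5]
    rw [Nat.choose_symm (by omega : j ≤ i)]
    ring
  rw [key, Finset.mul_sum]
  apply Finset.sum_congr rfl
  intro j _
  have h := Nat.add_one_mul_choose_eq i j
  calc (j + 1) * Nat.choose (i + 1) (j + 1) * Nat.choose r (j + 2)
      = Nat.choose (i + 1) (j + 1) * (j + 1) * Nat.choose r (j + 2) := by ring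
    _ = i.succ * Nat.choose i j * Nat.choose r (j + 2) := by rw [← h]
    _ = (i + 1) * (Nat.choose i j * Nat.choose r (j + 2)) := by
        rw [Nat.succ_eq_add_one]; ring
end
end
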